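/- Let 1 ≤ p ≤ ∞, let τ be a bijective, measure-preserving, ergodic transformation of [0,1] whose discrepancy satisfies D_n = O(1/(ln n)^{3+ε}) for some ε > 0, and let T be the operator on L^p([0,1]) defined by Tf = ṽ·(f∘τ), where ṽ is the normalized generalized-polynomial weight. Then there exists a subadditive function w : ℕ → [0,∞) with ∑_{n≥1} w(n)/n² < ∞ such that ‖T^n f‖_{L^p([0,1])} ≤ e^{w(n)}·‖f‖_{L^p([0,1])} for every n ∈ ℕ and every f ∈ L^p([0,1]). -/

import Mathlib

/-!
Since `τ` preserves measure, `‖Tⁿ‖` is at most the essential supremum of the cocycle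
`∏_{k<n} |ṽ(τᵏ x)|`. Its logarithm is `∑ᵢ sᵢ (n (Xᵢ + Xᵢ') + ∑ₖ log |τᵏ x - xᵢ|)`, and
`Xᵢ + Xᵢ' = -∫₀¹ log |t - xᵢ| dt`, so each inner term is an orbit sum of `log |· - xᵢ|` minus `n`
times its integral. Slicing `log |t - xᵢ|` into the layers `|t - xᵢ| ≤ r ʲ` and counting the orbit
points in each layer with the discrepancy bound, this difference is `O(1 + n / (log n)²)` for a
suitable choice of `r` and of the number of layers. Hence `w n = log (max ‖Tⁿ‖ 1)`, which is
subadditive because the operator norm is submultiplicative, satisfies `∑ w n / n² < ∞` by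
comparison with `∑ 1 / (n (log n)²)`.
-/

open MeasureTheory Set Filter
open scoped ENNReal

noncomputable section

open scoped Classical in
/-- The number of indices `n ∈ {1,…,N}` with `ω n ∈ [a,b)`. -/
def discCount (ω : ℕ → ℝ) (N : ℕ) (a b : ℝ) : ℕ :=
  ((Finset.Icc 1 N).filter fun n => ω n ∈ Set.Ico a b).card

/-- Discrepancy `D_N(ω)` of a sequence `(ω n)_{n ≥ 1}` of points of `[0,1)`. -/
def discrepancy (ω : ℕ → ℝ) (N : ℕ) : ℝ :=
  sSup { d : ℝ | ∃ a b : ℝ, 0 ≤ a ∧ a < b ∧ b ≤ 1 ∧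
    d = |(discCount ω N a b : ℝ) / N - (b - a)| }

/-- `D_N = sup_{x ∈ [0,1)} D_N((τⁿ x)_{n ≥ 1})`. -/
def tauDiscrepancy (τ : ℝ → ℝ) (N : ℕ) : ℝ :=
  sSup { d : ℝ | ∃ x ∈ Set.Ico (0:ℝ) 1, d = discrepancy (fun n => τ^[n] x) N }

/-- `XX x₀ = X₀ + X₀'` where `X₀ = x₀ - x₀ ln x₀` and `X₀' = (1-x₀) - (1-x₀) ln (1-x₀)`.
(Since `Real.log 0 = 0`, the convention `X₀ + X₀' = 1` for `x₀ ∈ {0,1}` holds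
automatically.) -/
def XX (x : ℝ) : ℝ :=
  (x - x * Real.log x) + ((1 - x) - (1 - x) * Real.log (1 - x))

/-- The normalized generalized-polynomial weight
`ṽ x = exp (∑ᵢ sᵢ (Xᵢ + Xᵢ')) * ∏ᵢ σᵢ(x - xᵢ)^{sᵢ}`. -/
def vtilde (l : ℕ) (s x₀ : Fin (l+1) → ℝ) (σ : Fin (l+1) → ℝ → ℝ) (x : ℝ) : ℝ :=
  Real.exp (∑ i, s i * XX (x₀ i)) * ∏ i, (σ i (x - x₀ i)) ^ (s i)

open scoped Finset

lemma abs_discCount_div_sub_le_one (ω : ℕ → ℝ) (N : ℕ) {a b : ℝ} (ha : 0 ≤ a) (hab : a ≤ b)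
    (hb : b ≤ 1) : |(discCount ω N a b : ℝ) / N - (b - a)| ≤ 1 := by
  have hcount : (discCount ω N a b : ℝ) ≤ N := by
    exact_mod_cast (Finset.card_filter_le _ _).trans (Nat.card_Icc 1 N).le
  have h1 : (discCount ω N a b : ℝ) / N ≤ 1 := div_le_one_of_le₀ hcount (Nat.cast_nonneg N)
  have h0 : 0 ≤ (discCount ω N a b : ℝ) / N := by positivity
  rw [abs_le]
  constructor <;> linarith

lemma le_discrepancy (ω : ℕ → ℝ) (N : ℕ) {a b : ℝ} (ha : 0 ≤ a) (hab : a < b) (hb : b ≤ 1) :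
    |(discCount ω N a b : ℝ) / N - (b - a)| ≤ discrepancy ω N := by
  refine le_csSup ⟨1, ?_⟩ ⟨a, b, ha, hab, hb, rfl⟩
  rintro d ⟨a', b', ha', hab', hb', rfl⟩
  exact abs_discCount_div_sub_le_one ω N ha' hab'.le hb'

lemma discrepancy_nonneg (ω : ℕ → ℝ) (N : ℕ) : 0 ≤ discrepancy ω N :=
  (abs_nonneg _).trans (le_discrepancy ω N le_rfl one_pos le_rfl)

lemma discrepancy_le_one (ω : ℕ → ℝ) (N : ℕ) : discrepancy ω N ≤ 1 :=
  csSup_le ⟨_, 0, 1, le_rfl, one_pos, le_rfl, rfl⟩ <| by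
    rintro d ⟨a, b, ha, hab, hb, rfl⟩
    exact abs_discCount_div_sub_le_one ω N ha hab.le hb

lemma discrepancy_le_tauDiscrepancy (τ : ℝ → ℝ) (N : ℕ) {x : ℝ} (hx : x ∈ Set.Ico (0 : ℝ) 1) :
    discrepancy (fun n => τ^[n] x) N ≤ tauDiscrepancy τ N := by
  refine le_csSup ⟨1, ?_⟩ ⟨x, hx, rfl⟩
  rintro d ⟨y, -, rfl⟩
  exact discrepancy_le_one _ N

lemma mul_sub_le_discCount (ω : ℕ → ℝ) (N : ℕ) {a b D : ℝ} (ha : 0 ≤ a) (hab : a ≤ b)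
    (hb : b ≤ 1) (hD : discrepancy ω N ≤ D) :
    (N : ℝ) * ((b - a) - D) ≤ discCount ω N a b := by
  rcases hab.eq_or_lt with rfl | hab
  · nlinarith [discrepancy_nonneg ω N, (Nat.cast_nonneg N : (0 : ℝ) ≤ N),
      (Nat.cast_nonneg _ : (0 : ℝ) ≤ discCount ω N a a)]
  rcases (Nat.cast_nonneg N : (0 : ℝ) ≤ N).eq_or_lt with hN | hN
  · rw [← hN, zero_mul]; positivity
  have h := (abs_le.mp ((le_discrepancy ω N ha hab hb).trans hD)).1
  rw [le_sub_iff_add_le, le_div_iff₀ hN] at h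
  linarith

/-- The interval `[c - min c δ, c + min (1 - c) δ)` lies in `[0, 1]` and within `δ` of `c`. -/
lemma mul_sub_le_card_abs_sub_le (ω : ℕ → ℝ) (N : ℕ) {c δ D : ℝ} (hc0 : 0 ≤ c) (hc1 : c ≤ 1)
    (hδ : 0 ≤ δ) (hD : discrepancy ω N ≤ D) :
    (N : ℝ) * (min c δ + min (1 - c) δ - D) ≤ #{k ∈ Finset.Icc 1 N | |ω k - c| ≤ δ} := by
  have hcount := mul_sub_le_discCount ω N (a := c - min c δ) (b := c + min (1 - c) δ)
    (by linarith [min_le_left c δ]) (by linarith [le_min hc0 hδ, le_min (sub_nonneg.2 hc1) hδ])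
    (by linarith [min_le_left (1 - c) δ]) hD
  refine (le_of_eq (by ring)).trans (hcount.trans (Nat.cast_le.mpr (Finset.card_le_card ?_)))
  refine Finset.monotone_filter_right _ fun k _ ⟨hk1, hk2⟩ => abs_le.mpr ⟨?_, ?_⟩
  · linarith [min_le_right c δ]
  · linarith [min_le_right (1 - c) δ]

lemma sub_mul_log_le_one {c : ℝ} (hc0 : 0 ≤ c) (hc1 : c ≤ 1) : c - c * Real.log c ≤ 1 := by
  rcases hc0.eq_or_lt with rfl | hc
  · simp
  have := Real.log_le_sub_one_of_pos (inv_pos.mpr hc)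
  rw [Real.log_inv] at this
  have := mul_le_mul_of_nonneg_left this hc.le
  rw [mul_sub, mul_inv_cancel₀ hc.ne'] at this
  linarith

/-- A discrete layer-cake bound for `c - c log c = ∫₀ᶜ (-log t) dt`. -/
lemma sub_mul_log_le_sum_min {c r : ℝ} (hc0 : 0 ≤ c) (hc1 : c ≤ 1) (hr0 : 0 < r) (hr1 : r < 1)
    (J : ℕ) :
    c - c * Real.log c ≤
      -Real.log r * ∑ j ∈ Finset.range J, min c (r ^ (j + 1)) + r ^ J + (1 - r) := by
  induction J generalizing c with
  | zero =>
    simp only [Finset.range_zero, Finset.sum_empty]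
    linarith [sub_mul_log_le_one hc0 hc1]
  | succ J ih =>
    rcases le_or_gt c r with hcr | hrc
    · -- rescaling `c = r c'` shifts the sum by one index
      obtain ⟨c', rfl⟩ : ∃ c', c = r * c' := ⟨c / r, by field_simp⟩
      have hc'0 : 0 ≤ c' := nonneg_of_mul_nonneg_right hc0 hr0
      have hc'1 : c' ≤ 1 := le_of_mul_le_mul_left (by simpa using hcr) hr0
      have hsum : ∑ j ∈ Finset.range (J + 1), min (r * c') (r ^ (j + 1)) =
          r * (c' + ∑ j ∈ Finset.range J, min c' (r ^ (j + 1))) := by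
        simp_rw [pow_succ' r, ← mul_min_of_nonneg _ _ hr0.le, ← Finset.mul_sum]
        rw [Finset.sum_range_succ', pow_zero, min_eq_left hc'1]
        simp_rw [← pow_succ']
        ring
      have hmul_log :
          r * c' * Real.log (r * c') = r * c' * Real.log r + r * (c' * Real.log c') := by
        rcases hc'0.eq_or_lt with rfl | hc'
        · simp
        · rw [Real.log_mul hr0.ne' hc'.ne']; ring
      have := mul_le_mul_of_nonneg_left (ih hc'0 hc'1) hr0.le
      rw [hsum, hmul_log, pow_succ']
      nlinarith
    · have hmin : ∀ j ∈ Finset.range (J + 1), min c (r ^ (j + 1)) = r * r ^ j := fun j _ => by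
        rw [min_eq_right ((pow_le_of_le_one hr0.le hr1.le (Nat.succ_ne_zero j)).trans hrc.le),
          pow_succ']
      have hgeom : (1 - r) * ∑ j ∈ Finset.range (J + 1), r * r ^ j = r * (1 - r ^ (J + 1)) := by
        rw [← Finset.mul_sum]; linear_combination -r * geom_sum_mul r (J + 1)
      have hlog : 1 - r ≤ -Real.log r := by linarith [Real.log_le_sub_one_of_pos hr0]
      have hsum := mul_le_mul_of_nonneg_right hlog
        (by positivity : 0 ≤ ∑ j ∈ Finset.range (J + 1), r * r ^ j)
      have htail : 0 ≤ r ^ (J + 1) * (1 - r) := mul_nonneg (by positivity) (by linarith)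
      rw [Finset.sum_congr rfl hmin]
      calc c - c * Real.log c ≤ 1 := sub_mul_log_le_one hc0 hc1
        _ = r * (1 - r ^ (J + 1)) + r ^ (J + 1) + (1 - r) - r ^ (J + 1) * (1 - r) := by ring
        _ ≤ _ := by linarith

lemma log_le_card_mul_log {t r : ℝ} (ht0 : 0 < t) (ht1 : t ≤ 1) (hr0 : 0 < r) (hr1 : r ≤ 1)
    (J : ℕ) :
    Real.log t ≤ #{j ∈ Finset.range J | t ≤ r ^ (j + 1)} * Real.log r := by
  induction J with
  | zero => simpa using Real.log_nonpos ht0.le ht1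
  | succ J ih =>
    by_cases htJ : t ≤ r ^ (J + 1)
    · have hall : {j ∈ Finset.range (J + 1) | t ≤ r ^ (j + 1)} = Finset.range (J + 1) :=
        Finset.filter_true_of_mem fun j hj =>
          htJ.trans (pow_le_pow_of_le_one hr0.le hr1 (by simpa using hj))
      rw [hall, Finset.card_range, ← Real.log_pow]
      exact Real.log_le_log ht0 htJ
    · rwa [Finset.range_add_one, Finset.filter_insert, if_neg htJ]

lemma XX_nonneg {c : ℝ} (hc : c ∈ Set.Icc (0 : ℝ) 1) : 0 ≤ XX c := by
  obtain ⟨hc0, hc1⟩ := hc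
  have h := mul_nonpos_of_nonneg_of_nonpos hc0 (Real.log_nonpos hc0 hc1)
  have h' := mul_nonpos_of_nonneg_of_nonpos (sub_nonneg.mpr hc1)
    (Real.log_nonpos (sub_nonneg.mpr hc1) (by linarith))
  unfold XX
  linarith

/-- `XX c = -∫₀¹ log |x - c| dx`, so the left side compares the orbit sum of `log |· - c|` with
`m` times its integral; slicing `log |· - c|` into the layers `|x - c| ≤ r ^ (j + 1)`, each layer
is visited about as often as its length predicts, up to the discrepancy. -/
lemma mul_XX_add_sum_log_abs_sub_le (ω : ℕ → ℝ) (m J : ℕ) {c r D : ℝ} (hc0 : 0 ≤ c)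
    (hc1 : c ≤ 1) (hω : ∀ k ∈ Finset.Icc 1 m, ω k ∈ Set.Icc (0 : ℝ) 1)
    (hne : ∀ k ∈ Finset.Icc 1 m, ω k ≠ c) (hr0 : 0 < r) (hr1 : r < 1)
    (hD : discrepancy ω m ≤ D) :
    m * XX c + ∑ k ∈ Finset.Icc 1 m, Real.log |ω k - c| ≤
      m * (2 * r ^ J + 2 * (1 - r)) - m * J * D * Real.log r := by
  set S : ℝ → ℝ := fun c => ∑ j ∈ Finset.range J, min c (r ^ (j + 1))
  set visits : ℕ → ℝ := fun j => #{k ∈ Finset.Icc 1 m | |ω k - c| ≤ r ^ (j + 1)}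
  have hvisits : (m : ℝ) * (S c + S (1 - c)) - m * J * D ≤ ∑ j ∈ Finset.range J, visits j := by
    calc (m : ℝ) * (S c + S (1 - c)) - m * J * D
        = ∑ j ∈ Finset.range J,
            (m : ℝ) * (min c (r ^ (j + 1)) + min (1 - c) (r ^ (j + 1)) - D) := by
          simp only [S, Finset.mul_sum, ← Finset.sum_add_distrib, Finset.sum_sub_distrib,
            Finset.sum_const, Finset.card_range, nsmul_eq_mul, mul_add, mul_sub]
          ring
      _ ≤ _ := Finset.sum_le_sum fun j _ =>
          mul_sub_le_card_abs_sub_le ω m hc0 hc1 (by positivity) hD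
  have hlog_sum :
      ∑ k ∈ Finset.Icc 1 m, Real.log |ω k - c| ≤ Real.log r * ∑ j ∈ Finset.range J, visits j := by
    calc ∑ k ∈ Finset.Icc 1 m, Real.log |ω k - c|
        ≤ ∑ k ∈ Finset.Icc 1 m,
            (#{j ∈ Finset.range J | |ω k - c| ≤ r ^ (j + 1)} : ℝ) * Real.log r := by
          refine Finset.sum_le_sum fun k hk => log_le_card_mul_log
            (abs_pos.mpr (sub_ne_zero.mpr (hne k hk))) ?_ hr0 hr1.le J
          obtain ⟨h0, h1⟩ := hω k hk
          exact abs_le.mpr ⟨by linarith, by linarith⟩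
      _ = _ := by
          rw [← Finset.sum_mul, mul_comm]
          congr 1
          simp_rw [visits, Finset.card_filter, Nat.cast_sum]
          exact Finset.sum_comm
  have hXX : XX c ≤ -Real.log r * (S c + S (1 - c)) + 2 * r ^ J + 2 * (1 - r) := by
    have := sub_mul_log_le_sum_min hc0 hc1 hr0 hr1 J
    have := sub_mul_log_le_sum_min (sub_nonneg.mpr hc1) (by linarith) hr0 hr1 J
    unfold XX
    linarith
  have hm : (0 : ℝ) ≤ m := Nat.cast_nonneg m
  nlinarith [mul_le_mul_of_nonneg_left hXX hm,
    mul_le_mul_of_nonpos_left hvisits (Real.log_nonpos hr0.le hr1.le)]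

/-- With `L = log m`, the choice `r = exp (-1 / L²)`, `J = ⌈L³⌉` balances the error terms. -/
lemma exists_orbit_error_le {m D : ℝ} (hm : 0 < m) (hL : 1 ≤ Real.log m) (hD : 0 ≤ D) :
    ∃ r : ℝ, ∃ J : ℕ, 0 < r ∧ r < 1 ∧
      m * (2 * r ^ J + 2 * (1 - r)) - m * J * D * Real.log r ≤
        2 + 2 * (m / Real.log m ^ 2) + 2 * m * D * Real.log m := by
  set L := Real.log m
  set δ := (L ^ 2)⁻¹
  have hδ0 : 0 < δ := by positivity
  have hδ1 : δ ≤ 1 := inv_le_one_of_one_le₀ (one_le_pow₀ hL)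
  have hLδ : L ^ 3 * δ = L := by simp only [δ]; field_simp
  refine ⟨Real.exp (-δ), ⌈L ^ 3⌉₊, Real.exp_pos _, Real.exp_lt_one_iff.mpr (neg_lt_zero.mpr hδ0),
    ?_⟩
  have hJ : L ≤ ⌈L ^ 3⌉₊ * δ := by
    have := mul_le_mul_of_nonneg_right (Nat.le_ceil (L ^ 3)) hδ0.le
    rwa [hLδ] at this
  have hJ' : ⌈L ^ 3⌉₊ * δ ≤ 2 * L := by
    have := mul_le_mul_of_nonneg_right (Nat.ceil_lt_add_one (by positivity : 0 ≤ L ^ 3)).le hδ0.le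
    rw [add_mul, hLδ, one_mul] at this
    linarith
  have hpow : m * Real.exp (-δ) ^ ⌈L ^ 3⌉₊ ≤ 1 := by
    rw [← Real.exp_nat_mul, ← le_div_iff₀' hm, one_div, ← Real.exp_log hm, ← Real.exp_neg,
      Real.exp_le_exp]
    linarith
  have hsub : m * (1 - Real.exp (-δ)) ≤ m / L ^ 2 := by
    rw [div_eq_mul_inv]
    exact mul_le_mul_of_nonneg_left (by linarith [Real.one_sub_le_exp_neg δ]) hm.le
  have hlog : -(m * ⌈L ^ 3⌉₊ * D * Real.log (Real.exp (-δ))) ≤ 2 * m * D * L := by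
    rw [Real.log_exp]
    nlinarith [mul_le_mul_of_nonneg_left hJ' (mul_nonneg hm.le hD)]
  nlinarith

lemma one_le_log_of_three_le {m : ℕ} (hm : 3 ≤ m) : 1 ≤ Real.log m := by
  have : (3 : ℝ) ≤ m := by exact_mod_cast hm
  rw [Real.le_log_iff_exp_le (by positivity)]
  linarith [Real.exp_one_lt_d9]

lemma div_rpow_add_le_div_pow {L C ε : ℝ} (hL : 1 ≤ L) (hε : 0 ≤ ε) (k : ℕ) :
    C / L ^ (k + ε) ≤ max C 0 / L ^ k := by
  calc C / L ^ (k + ε) ≤ max C 0 / L ^ (k + ε) := by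
        gcongr
        exact le_max_left C 0
    _ ≤ max C 0 / L ^ (k : ℝ) := div_le_div_of_nonneg_left (le_max_right C 0) (by positivity)
        (Real.rpow_le_rpow_of_exponent_le hL (by linarith))
    _ = max C 0 / L ^ k := by rw [Real.rpow_natCast]

lemma prod_range_succ_eq_mul_prod_Icc {M : Type*} [CommMonoid M] (f : ℕ → M) (m : ℕ) :
    ∏ k ∈ Finset.range (m + 1), f k = f 0 * ∏ k ∈ Finset.Icc 1 m, f k := by
  rw [Finset.prod_range_succ', mul_comm, ← Finset.Ico_add_one_right_eq_Icc,
    Finset.prod_Ico_eq_prod_range, Nat.add_sub_cancel]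
  simp_rw [add_comm 1]

section Weight

variable {l : ℕ} {s x₀ : Fin (l + 1) → ℝ}

lemma abs_vtilde_le {σ : Fin (l + 1) → ℝ → ℝ} (hσ : ∀ i, σ i = id ∨ σ i = fun y => |y|)
    (x : ℝ) : |vtilde l s x₀ σ x| ≤ vtilde l s x₀ (fun _ y => |y|) x := by
  rw [vtilde, vtilde, abs_mul, abs_of_pos (Real.exp_pos _), Finset.abs_prod]
  gcongr with i
  rcases hσ i with h | h <;> rw [h]
  · exact Real.abs_rpow_le_abs_rpow _ _
  · exact (abs_of_nonneg (by positivity)).le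

lemma vtilde_abs_le_exp (hs : ∀ i, 0 ≤ s i) (hx₀ : ∀ i, x₀ i ∈ Set.Icc (0 : ℝ) 1) {x : ℝ}
    (hx : x ∈ Set.Icc (0 : ℝ) 1) :
    vtilde l s x₀ (fun _ y => |y|) x ≤ Real.exp (∑ i, s i * XX (x₀ i)) := by
  refine mul_le_of_le_one_right (Real.exp_pos _).le (Finset.prod_le_one (fun i _ => by positivity)
    fun i _ => Real.rpow_le_one (abs_nonneg _) ?_ (hs i))
  obtain ⟨h0, h1⟩ := hx₀ i
  obtain ⟨hx0, hx1⟩ := hx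
  exact abs_le.mpr ⟨by linarith, by linarith⟩

lemma vtilde_abs_eq_exp {x : ℝ} (hne : ∀ i, x ≠ x₀ i) :
    vtilde l s x₀ (fun _ y => |y|) x =
      Real.exp (∑ i, s i * (XX (x₀ i) + Real.log |x - x₀ i|)) := by
  simp only [vtilde, mul_add, Finset.sum_add_distrib, Real.exp_add, Real.exp_sum]
  congr 1
  refine Finset.prod_congr rfl fun i _ => ?_
  rw [Real.rpow_def_of_pos (abs_pos.mpr (sub_ne_zero.mpr (hne i))), mul_comm]

lemma prod_vtilde_abs_le (ω : ℕ → ℝ) (m J : ℕ) {r D : ℝ} (hs : ∀ i, 0 < s i)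
    (hx₀ : ∀ i, x₀ i ∈ Set.Icc (0 : ℝ) 1) (hω : ∀ k ∈ Finset.Icc 1 m, ω k ∈ Set.Icc (0 : ℝ) 1)
    (hr0 : 0 < r) (hr1 : r < 1) (hD : discrepancy ω m ≤ D) :
    ∏ k ∈ Finset.Icc 1 m, vtilde l s x₀ (fun _ y => |y|) (ω k) ≤
      Real.exp ((∑ i, s i) * (m * (2 * r ^ J + 2 * (1 - r)) - m * J * D * Real.log r)) := by
  by_cases hhit : ∃ k ∈ Finset.Icc 1 m, ∃ i, ω k = x₀ i
  · obtain ⟨k, hk, i, hki⟩ := hhit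
    refine (le_of_eq (Finset.prod_eq_zero hk ?_)).trans (Real.exp_pos _).le
    exact mul_eq_zero_of_right _ (Finset.prod_eq_zero (Finset.mem_univ i)
      (by simp [hki, Real.zero_rpow (hs i).ne']))
  push Not at hhit
  rw [Finset.prod_congr rfl fun k hk => vtilde_abs_eq_exp (hhit k hk), ← Real.exp_sum,
    Real.exp_le_exp, Finset.sum_comm, Finset.sum_mul]
  refine Finset.sum_le_sum fun i _ => ?_
  rw [← Finset.mul_sum, Finset.sum_add_distrib, Finset.sum_const, Nat.card_Icc,
    Nat.add_sub_cancel, nsmul_eq_mul]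
  exact mul_le_mul_of_nonneg_left (mul_XX_add_sum_log_abs_sub_le ω m J (hx₀ i).1 (hx₀ i).2 hω
    (fun k hk => hhit k hk i) hr0 hr1 hD) (hs i).le

variable {τ : ℝ → ℝ}

lemma prod_vtilde_abs_orbit_le (hτ : Set.MapsTo τ (Set.Icc 0 1) (Set.Icc 0 1))
    (hs : ∀ i, 0 < s i) (hx₀ : ∀ i, x₀ i ∈ Set.Icc (0 : ℝ) 1) {C : ℝ} {m : ℕ}
    (hm : 3 ≤ m) (hD : tauDiscrepancy τ m ≤ C / Real.log m ^ 3) {x : ℝ}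
    (hx : x ∈ Set.Ico (0 : ℝ) 1) :
    ∏ k ∈ Finset.Icc 1 m, vtilde l s x₀ (fun _ y => |y|) (τ^[k] x) ≤
      Real.exp ((∑ i, s i) * (2 + (2 + 2 * C) * (m / Real.log m ^ 2))) := by
  have hdisc := discrepancy_le_tauDiscrepancy τ m hx
  have hL := one_le_log_of_three_le hm
  obtain ⟨r, J, hr0, hr1, herr⟩ := exists_orbit_error_le (by positivity) hL
    ((discrepancy_nonneg _ m).trans hdisc)
  refine (prod_vtilde_abs_le _ m J hs hx₀ (fun k _ => hτ.iterate k (Set.Ico_subset_Icc_self hx))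
    hr0 hr1 hdisc).trans (Real.exp_le_exp.mpr (mul_le_mul_of_nonneg_left (herr.trans ?_)
      (Finset.sum_nonneg fun i _ => (hs i).le)))
  have hDL : tauDiscrepancy τ m * Real.log m ≤ C / Real.log m ^ 2 := by
    calc tauDiscrepancy τ m * Real.log m ≤ C / Real.log m ^ 3 * Real.log m := by gcongr
      _ = C / Real.log m ^ 2 := by field_simp
  calc 2 + 2 * (m / Real.log m ^ 2) + 2 * m * tauDiscrepancy τ m * Real.log m
      = 2 + 2 * (m / Real.log m ^ 2) + 2 * m * (tauDiscrepancy τ m * Real.log m) := by ring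
    _ ≤ 2 + 2 * (m / Real.log m ^ 2) + 2 * m * (C / Real.log m ^ 2) := by gcongr
    _ = 2 + (2 + 2 * C) * (m / Real.log m ^ 2) := by ring

lemma norm_prod_vtilde_orbit_le {σ : Fin (l + 1) → ℝ → ℝ}
    (hτ : Set.MapsTo τ (Set.Icc 0 1) (Set.Icc 0 1)) (hs : ∀ i, 0 < s i)
    (hx₀ : ∀ i, x₀ i ∈ Set.Icc (0 : ℝ) 1) (hσ : ∀ i, σ i = id ∨ σ i = fun y => |y|) {C : ℝ}
    {m : ℕ} (hm : 3 ≤ m) (hD : tauDiscrepancy τ m ≤ C / Real.log m ^ 3) {x : ℝ}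
    (hx : x ∈ Set.Ico (0 : ℝ) 1) :
    ‖∏ k ∈ Finset.range (m + 1), (vtilde l s x₀ σ (τ^[k] x) : ℂ)‖ ≤
      Real.exp (∑ i, s i * XX (x₀ i) + (∑ i, s i) * (2 + (2 + 2 * C) * (m / Real.log m ^ 2))) := by
  have habs : ∀ y, ‖(vtilde l s x₀ σ y : ℂ)‖ ≤ vtilde l s x₀ (fun _ y => |y|) y := fun y => by
    rw [Complex.norm_real, Real.norm_eq_abs]; exact abs_vtilde_le hσ y
  rw [norm_prod, prod_range_succ_eq_mul_prod_Icc, Real.exp_add]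
  refine mul_le_mul ((habs x).trans (vtilde_abs_le_exp (fun i => (hs i).le) hx₀
    (Set.Ico_subset_Icc_self hx))) ((Finset.prod_le_prod (fun _ _ => norm_nonneg _)
      fun k _ => habs _).trans (prod_vtilde_abs_orbit_le hτ hs hx₀ hm hD hx))
    (Finset.prod_nonneg fun _ _ => norm_nonneg _) (Real.exp_pos _).le

end Weight

section WeightedComposition

variable {α 𝕜 : Type*} [MeasurableSpace α] [RCLike 𝕜] {μ : Measure α} {p : ℝ≥0∞}
  [Fact (1 ≤ p)] {τ : α → α} {v : α → 𝕜} {T : Lp 𝕜 p μ →L[𝕜] Lp 𝕜 p μ}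

lemma pow_apply_ae_eq_prod_mul (hτ : Measure.QuasiMeasurePreserving τ μ μ)
    (hT : ∀ f : Lp 𝕜 p μ, (T f : α → 𝕜) =ᵐ[μ] fun x => v x * f (τ x)) (n : ℕ) (f : Lp 𝕜 p μ) :
    ((T ^ n) f : α → 𝕜) =ᵐ[μ] fun x => (∏ k ∈ Finset.range n, v (τ^[k] x)) * f (τ^[n] x) := by
  induction n with
  | zero => simp
  | succ n ih =>
    have hpow : (T ^ (n + 1)) f = T ((T ^ n) f) := by rw [pow_succ']; rfl
    filter_upwards [hpow ▸ hT ((T ^ n) f), hτ.ae_eq ih] with x hx hτx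
    simp only [Function.comp_apply] at hτx
    rw [hx, hτx, Finset.prod_range_succ']
    simp only [Function.iterate_succ_apply, Function.iterate_zero_apply]
    ring

lemma norm_pow_le_of_ae_norm_prod_le (hτ : MeasurePreserving τ μ μ)
    (hT : ∀ f : Lp 𝕜 p μ, (T f : α → 𝕜) =ᵐ[μ] fun x => v x * f (τ x)) {n : ℕ} {B : ℝ}
    (hB : 0 ≤ B) (hv : ∀ᵐ x ∂μ, ‖∏ k ∈ Finset.range n, v (τ^[k] x)‖ ≤ B) : ‖T ^ n‖ ≤ B := by
  refine ContinuousLinearMap.opNorm_le_bound _ hB fun f => ?_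
  have hτn := hτ.iterate n
  rw [← Lp.norm_compMeasurePreserving f hτn]
  refine Lp.norm_le_mul_norm_of_ae_le_mul ?_
  filter_upwards [pow_apply_ae_eq_prod_mul hτ.quasiMeasurePreserving hT n f,
    Lp.coeFn_compMeasurePreserving f hτn, hv] with x hx hfx hvx
  rw [hx, hfx, norm_mul, Function.comp_apply]
  exact mul_le_mul_of_nonneg_right hvx (norm_nonneg _)

end WeightedComposition

lemma log_max_norm_pow_add_le {R : Type*} [SeminormedRing R] (a : R) (m n : ℕ) :
    Real.log (max ‖a ^ (m + n)‖ 1) ≤ Real.log (max ‖a ^ m‖ 1) + Real.log (max ‖a ^ n‖ 1) := by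
  have hpos : ∀ k : ℕ, 0 < max ‖a ^ k‖ 1 := fun k => one_pos.trans_le (le_max_right _ _)
  rw [← Real.log_mul (hpos m).ne' (hpos n).ne']
  refine Real.log_le_log (hpos _) (max_le ?_ ?_)
  · rw [pow_add]
    exact (norm_mul_le _ _).trans (mul_le_mul (le_max_left _ _) (le_max_left _ _) (norm_nonneg _)
      (hpos m).le)
  · exact one_le_mul_of_one_le_of_one_le (le_max_right _ _) (le_max_right _ _)

lemma log_max_norm_le_of_norm_le_exp {R : Type*} [SeminormedRing R] {a : R} {b : ℝ} (hb : 0 ≤ b)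
    (h : ‖a‖ ≤ Real.exp b) : Real.log (max ‖a‖ 1) ≤ b := by
  rw [Real.log_le_iff_le_exp (one_pos.trans_le (le_max_right _ _))]
  exact max_le h (Real.one_le_exp hb)

lemma summable_inv_mul_log_sq : Summable fun n : ℕ => ((n : ℝ) * Real.log n ^ 2)⁻¹ := by
  rw [← summable_condensed_iff_of_eventually_nonneg (Filter.Eventually.of_forall
    fun n => by positivity)]
  · have h : Summable fun k : ℕ => ((k : ℝ) ^ 2)⁻¹ * (Real.log 2 ^ 2)⁻¹ :=
      (Real.summable_nat_pow_inv.mpr one_lt_two).mul_right _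
    refine h.congr fun k => ?_
    push_cast
    rw [Real.log_pow, mul_inv, ← mul_assoc, mul_inv_cancel₀ (by positivity), one_mul, mul_pow,
      mul_inv]
  · filter_upwards [Filter.eventually_ge_atTop 2] with n hn
    have hn' : (2 : ℝ) ≤ n := by exact_mod_cast hn
    have hlog : 0 < Real.log n := Real.log_pos (by linarith)
    push_cast
    gcongr <;> linarith

lemma summable_div_sq_of_eventually_le {w : ℕ → ℝ} (hw : ∀ n, 0 ≤ w n) {A B : ℝ}
    (h : ∀ᶠ n : ℕ in Filter.atTop, w (n + 1) ≤ A + B * (n / Real.log n ^ 2)) :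
    Summable fun n : ℕ => w n / (n : ℝ) ^ 2 := by
  rw [← summable_nat_add_iff 1]
  refine Summable.of_norm_bounded_eventually_nat
    (((Real.summable_nat_pow_inv.mpr one_lt_two).mul_left A).add
      (summable_inv_mul_log_sq.mul_left B)) ?_
  filter_upwards [h, Filter.eventually_ge_atTop 1] with n hn hn1
  have hn0 : (0 : ℝ) < n := by exact_mod_cast hn1
  rw [Real.norm_of_nonneg (div_nonneg (hw _) (by positivity)), Nat.cast_add_one]
  calc w (n + 1) / ((n : ℝ) + 1) ^ 2 ≤ w (n + 1) / (n : ℝ) ^ 2 := by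
        gcongr
        · exact hw _
        · linarith
    _ ≤ (A + B * (n / Real.log n ^ 2)) / (n : ℝ) ^ 2 := by gcongr
    _ = A * ((n : ℝ) ^ 2)⁻¹ + B * ((n : ℝ) * Real.log n ^ 2)⁻¹ := by
        field_simp

theorem positive_power_bounds
    (p : ℝ≥0∞) [Fact (1 ≤ p)]
    (τ : ℝ → ℝ)
    (hτbij : Set.BijOn τ (Set.Icc 0 1) (Set.Icc 0 1))
    (hτerg : Ergodic τ (volume.restrict (Set.Icc (0:ℝ) 1)))
    (ε : ℝ) (hε : 0 < ε)
    (hD : ∃ C : ℝ, ∀ n : ℕ, 2 ≤ n →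
      tauDiscrepancy τ n ≤ C / (Real.log n) ^ (3 + ε))
    (l : ℕ) (s x₀ : Fin (l+1) → ℝ) (σ : Fin (l+1) → ℝ → ℝ)
    (hs : ∀ i, 0 < s i) (hx₀ : ∀ i, x₀ i ∈ Set.Icc (0:ℝ) 1)
    (hσ : ∀ i, σ i = id ∨ σ i = fun y => |y|)
    (T : Lp ℂ p (volume.restrict (Set.Icc (0:ℝ) 1)) →L[ℂ]
         Lp ℂ p (volume.restrict (Set.Icc (0:ℝ) 1)))
    (hT : ∀ f : Lp ℂ p (volume.restrict (Set.Icc (0:ℝ) 1)),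
      (T f : ℝ → ℂ) =ᵐ[volume.restrict (Set.Icc (0:ℝ) 1)]
        fun x => (vtilde l s x₀ σ x : ℂ) * f (τ x)) :
    ∃ w : ℕ → ℝ, (∀ n, 0 ≤ w n) ∧ (∀ m n, w (m + n) ≤ w m + w n) ∧
      Summable (fun n : ℕ => w n / (n : ℝ) ^ 2) ∧
      ∀ (n : ℕ) (f : Lp ℂ p (volume.restrict (Set.Icc (0:ℝ) 1))),
        ‖(T ^ n) f‖ ≤ Real.exp (w n) * ‖f‖ := by
  obtain ⟨C, hC⟩ := hD
  set K := ∑ i, s i * XX (x₀ i) with hK_def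
  set S := ∑ i, s i with hS_def
  have hK : 0 ≤ K := Finset.sum_nonneg fun i _ => mul_nonneg (hs i).le (XX_nonneg (hx₀ i))
  have hS : 0 ≤ S := Finset.sum_nonneg fun i _ => (hs i).le
  have hae : ∀ᵐ x ∂volume.restrict (Set.Icc (0 : ℝ) 1), x ∈ Set.Ico (0 : ℝ) 1 := by
    rw [← Measure.restrict_congr_set Ico_ae_eq_Icc]
    exact ae_restrict_mem measurableSet_Ico
  have hnorm : ∀ m : ℕ, 3 ≤ m → ‖T ^ (m + 1)‖ ≤
      Real.exp (K + 2 * S + S * (2 + 2 * max C 0) * (m / Real.log m ^ 2)) := by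
    intro m hm
    have hD := (hC m (by omega)).trans
      (div_rpow_add_le_div_pow (one_le_log_of_three_le hm) hε.le 3)
    refine norm_pow_le_of_ae_norm_prod_le hτerg.toMeasurePreserving hT (Real.exp_pos _).le ?_
    filter_upwards [hae] with x hx
    exact (norm_prod_vtilde_orbit_le hτbij.mapsTo hs hx₀ hσ hm hD hx).trans_eq
      (by rw [hK_def, hS_def]; ring_nf)
  have hw0 : ∀ n, 0 ≤ Real.log (max ‖T ^ n‖ 1) := fun n => Real.log_nonneg (le_max_right _ _)
  refine ⟨fun n => Real.log (max ‖T ^ n‖ 1), hw0, log_max_norm_pow_add_le T,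
    summable_div_sq_of_eventually_le hw0 (A := K + 2 * S) (B := S * (2 + 2 * max C 0)) ?_,
    fun n f => ?_⟩
  · filter_upwards [Filter.eventually_ge_atTop 3] with m hm
    exact log_max_norm_le_of_norm_le_exp (by positivity) (hnorm m hm)
  · rw [Real.exp_log (one_pos.trans_le (le_max_right _ _))]
    exact ((T ^ n).le_opNorm f).trans (mul_le_mul_of_nonneg_right (le_max_left _ _) (norm_nonneg _))

end
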